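/- Let 𝕂 = {x ∈ ℓ² : xᵢ ≥ 0 for all i ∈ ℕ} be the positive cone in ℓ² with metric projection P_𝕂, and let x ∈ ℓ² satisfy |xᵢ| > 0 for all i ∈ ℕ. Then for every w ∈ ℓ² with w ≠ 0, the one-sided Gâteaux directional derivative of P_𝕂 at x along w exists and equals B(x; w), where (B(x; w))ᵢ = wᵢ if xᵢ > 0 and (B(x; w))ᵢ = 0 if xᵢ ≤ 0, for all i ∈ ℕ. That is, (P_𝕂(x + t·w) − P_𝕂(x))/t → B(x; w) as t → 0⁺. -/

import Mathlib

/-!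
The metric projection onto the positive cone of `ℓᵖ` (`p < ∞`) is the coordinatewise positive
part `y ↦ (max (yᵢ) 0)ᵢ`: replacing a competitor's coordinate by `max yᵢ 0` never increases
`|yᵢ - ·|`, and strictly decreases it where they differ. Hence the `i`-th coordinate of the
difference quotient is the slope of `s ↦ max (xᵢ + s wᵢ) 0`, which tends to `bᵢ` because
`max · 0` is differentiable at `xᵢ ≠ 0`; their distances to `bᵢ` are dominated by `2 |wᵢ|`, so
Tannery's theorem upgrades coordinatewise convergence to convergence in `ℓ²`.
-/

open Filter Topology
open scoped ENNReal

lemma abs_sub_max_zero_lt_abs_sub {y c : ℝ} (hc : 0 ≤ c) (hne : c ≠ max y 0) :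
    |y - max y 0| < |y - c| := by
  rcases le_total 0 y with hy | hy
  · rw [max_eq_left hy] at hne ⊢
    simpa [sub_eq_zero] using hne.symm
  · rw [max_eq_right hy] at hne ⊢
    rw [abs_of_nonpos (by linarith), abs_of_nonpos (by linarith)]
    exact lt_of_le_of_ne (by linarith) (by contrapose! hne; linarith)

lemma abs_sub_max_zero_le_abs_sub {y c : ℝ} (hc : 0 ≤ c) : |y - max y 0| ≤ |y - c| := by
  by_cases hne : c = max y 0
  · rw [hne]
  · exact (abs_sub_max_zero_lt_abs_sub hc hne).le

lemma hasDerivAt_max_zero {a : ℝ} (ha : a ≠ 0) :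
    HasDerivAt (fun x : ℝ => max x 0) (if 0 < a then 1 else 0) a := by
  rcases ha.lt_or_gt with ha | ha
  · rw [if_neg ha.not_gt]
    exact (hasDerivAt_const a 0).congr_of_eventuallyEq
      ((gt_mem_nhds ha).mono fun x hx => max_eq_right hx.le)
  · rw [if_pos ha]
    exact (hasDerivAt_id a).congr_of_eventuallyEq
      ((lt_mem_nhds ha).mono fun x hx => max_eq_left hx.le)

lemma tendsto_slope_max_zero {a : ℝ} (ha : a ≠ 0) (c : ℝ) :
    Tendsto (fun t : ℝ => t⁻¹ * (max (a + t * c) 0 - max a 0)) (𝓝[>] 0)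
      (𝓝 (if 0 < a then c else 0)) := by
  have h := (hasDerivAt_max_zero (a := a + 0 * c) (by simpa using ha)).comp (0 : ℝ)
    (((hasDerivAt_id (0 : ℝ)).mul_const c).const_add a)
  simpa [Function.comp_def] using h.tendsto_slope_zero_right

lemma abs_slope_max_zero_le {a c t : ℝ} (ht : 0 < t) :
    |t⁻¹ * (max (a + t * c) 0 - max a 0)| ≤ |c| := by
  rw [abs_mul, abs_inv, abs_of_pos ht, inv_mul_le_iff₀ ht]
  simpa [abs_mul, abs_of_pos ht] using abs_max_sub_max_le_abs (a + t * c) a 0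

namespace lp

section Dominated

variable {ι : Type*} {E : ι → Type*} [∀ i, NormedAddCommGroup (E i)] {p : ℝ≥0∞} [Fact (1 ≤ p)]

theorem norm_lt_norm_of_forall_le_of_lt (hp : p ≠ ∞) {f g : lp E p}
    (hle : ∀ i, ‖f i‖ ≤ ‖g i‖) {j : ι} (hlt : ‖f j‖ < ‖g j‖) : ‖f‖ < ‖g‖ := by
  have hp' := (ENNReal.toReal_pos_iff_ne_top p).2 hp
  rw [← Real.rpow_lt_rpow_iff (norm_nonneg f) (norm_nonneg g) hp', norm_rpow_eq_tsum hp',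
    norm_rpow_eq_tsum hp']
  exact Summable.tsum_lt_tsum (fun i => by gcongr; exact hle i) (by gcongr)
    ((lp.memℓp f).summable hp') ((lp.memℓp g).summable hp')

theorem tendsto_of_tendsto_apply_of_dominated {α : Type*} {l : Filter α} (hp : p ≠ ∞)
    {F : α → lp E p} {G g : lp E p} (hlim : ∀ i, Tendsto (fun a => F a i) l (𝓝 (G i)))
    (hbound : ∀ᶠ a in l, ∀ i, ‖F a i - G i‖ ≤ ‖g i‖) : Tendsto F l (𝓝 G) := by
  have hp' := (ENNReal.toReal_pos_iff_ne_top p).2 hp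
  rw [tendsto_iff_norm_sub_tendsto_zero]
  have hrpow : Tendsto (fun a => ‖F a - G‖ ^ p.toReal) l (𝓝 0) := by
    simp_rw [norm_rpow_eq_tsum hp']
    have hcoord : ∀ i, Tendsto (fun a => ‖(F a - G) i‖ ^ p.toReal) l (𝓝 0) := fun i => by
      simpa [Real.zero_rpow hp'.ne'] using
        (((hlim i).sub_const (G i)).norm).rpow_const (Or.inr hp'.le)
    simpa using tendsto_tsum_of_dominated_convergence ((lp.memℓp g).summable hp') hcoord
      (hbound.mono fun a ha i => by
        rw [Real.norm_of_nonneg (by positivity), coeFn_sub, Pi.sub_apply]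
        gcongr
        exact ha i)
  simpa [Real.zero_rpow (inv_pos.2 hp').ne', Real.rpow_rpow_inv (norm_nonneg _) hp'.ne'] using
    hrpow.rpow_const (p := p.toReal⁻¹) (Or.inr (inv_nonneg.2 hp'.le))

end Dominated

section PosPart

variable {ι : Type*} {p : ℝ≥0∞}

def posPart (y : lp (fun _ : ι => ℝ) p) : lp (fun _ : ι => ℝ) p :=
  ⟨fun i => max (y i) 0, (lp.memℓp y).mono' fun i => by
    simpa using abs_max_sub_max_le_abs (y i) 0 0⟩

@[simp]
lemma posPart_apply (y : lp (fun _ : ι => ℝ) p) (i : ι) : posPart y i = max (y i) 0 := rfl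

lemma posPart_nonneg (y : lp (fun _ : ι => ℝ) p) (i : ι) : 0 ≤ posPart y i := le_max_right _ _

theorem eq_posPart_of_norm_sub_le [Fact (1 ≤ p)] (hp : p ≠ ∞) {y u : lp (fun _ : ι => ℝ) p}
    (hu : ∀ i, 0 ≤ u i) (hmin : ‖y - u‖ ≤ ‖y - posPart y‖) : u = posPart y := by
  by_contra hne
  obtain ⟨j, hj⟩ : ∃ j, u j ≠ max (y j) 0 := by
    by_contra! h
    exact hne (lp.ext (funext h))
  refine hmin.not_gt (norm_lt_norm_of_forall_le_of_lt hp (fun i => ?_) (j := j) ?_)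
  · simpa using abs_sub_max_zero_le_abs_sub (y := y i) (hu i)
  · simpa using abs_sub_max_zero_lt_abs_sub (hu j) hj

end PosPart

end lp

/-- Let `P` be the metric projection onto the positive cone `𝕂` of `ℓ²` and let `x` have
all coordinates nonzero.  Then for every nonzero `w`, the one-sided Gâteaux directional
derivative of `P` at `x` along `w` exists and equals `B(x; w)`, the element of `ℓ²`
whose `i`-th coordinate is `wᵢ` if `xᵢ > 0` and `0` otherwise. -/
theorem gateaux_proj_positiveCone_lp2_mixed
    (P : lp (fun _ : ℕ => ℝ) 2 → lp (fun _ : ℕ => ℝ) 2)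
    (hP : ∀ x, (∀ i : ℕ, 0 ≤ P x i) ∧
      ∀ z : lp (fun _ : ℕ => ℝ) 2, (∀ i : ℕ, 0 ≤ z i) → ‖x - P x‖ ≤ ‖x - z‖)
    (x : lp (fun _ : ℕ => ℝ) 2) (hx : ∀ i : ℕ, x i ≠ 0) :
    ∀ w : lp (fun _ : ℕ => ℝ) 2, w ≠ 0 →
      ∃ b : lp (fun _ : ℕ => ℝ) 2,
        (∀ i : ℕ, b i = if 0 < x i then w i else 0) ∧
        Filter.Tendsto (fun t : ℝ => t⁻¹ • (P (x + t • w) - P x)) (𝓝[>] (0 : ℝ))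
          (𝓝 b) := by
  intro w _
  have hP_apply : ∀ y i, P y i = max (y i) 0 := fun y i => by
    rw [lp.eq_posPart_of_norm_sub_le ENNReal.ofNat_ne_top (hP y).1
      ((hP y).2 _ (lp.posPart_nonneg y)), lp.posPart_apply]
  have hquot : ∀ (t : ℝ) i, (t⁻¹ • (P (x + t • w) - P x)) i
      = t⁻¹ * (max (x i + t * w i) 0 - max (x i) 0) := fun t i => by
    simp only [lp.coeFn_smul, lp.coeFn_sub, lp.coeFn_add, Pi.smul_apply, Pi.sub_apply,
      Pi.add_apply, smul_eq_mul, hP_apply]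
  have hb : Memℓp (fun i => if 0 < x i then w i else 0) 2 :=
    (lp.memℓp w).mono' fun i => by split_ifs <;> simp
  refine ⟨⟨_, hb⟩, fun i => rfl, ?_⟩
  refine lp.tendsto_of_tendsto_apply_of_dominated ENNReal.ofNat_ne_top (g := (2 : ℝ) • w)
    (fun i => by simpa only [hquot] using tendsto_slope_max_zero (hx i) (w i)) ?_
  filter_upwards [self_mem_nhdsWithin] with t (ht : 0 < t) i
  have hbi : |(if 0 < x i then w i else 0)| ≤ |w i| := by split_ifs <;> simp
  calc ‖(t⁻¹ • (P (x + t • w) - P x)) i - (if 0 < x i then w i else 0)‖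
      ≤ |t⁻¹ * (max (x i + t * w i) 0 - max (x i) 0)| + |(if 0 < x i then w i else 0)| := by
        rw [hquot]; exact abs_sub _ _
    _ ≤ |w i| + |w i| := add_le_add (abs_slope_max_zero_le ht) hbi
    _ = ‖((2 : ℝ) • w) i‖ := by simp; ring
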